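/- Let M be a non-trivial maximal modal deductive system of an H₃∨△-algebra A, with ∇x := (x→△x)→△x. Let M₀ = { x ∈ A : ∇x ∉ M } and M_{1/2} = { x ∈ A : x ∉ M and ∇x ∈ M }, and define h : A → C₃^{→,∨} by h(x) = 0 if x ∈ M₀, h(x) = 1/2 if x ∈ M_{1/2}, and h(x) = 1 if x ∈ M. Then h is a homomorphism of H₃∨△-algebras (preserving →, ∨, △ and 1) with h⁻¹({1}) = M. -/
import Mathlib


class H3vD (A : Type*) extends One A where
  imp : A → A → A
  sup : A → A → A
  box : A → A
  h1 : ∀ x y : A, imp x (imp y x) = 1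
  h2 : ∀ x y z : A, imp (imp x (imp y z)) (imp (imp x y) (imp x z)) = 1
  h3 : ∀ x y : A, imp x y = 1 → imp y x = 1 → x = y
  it3 : ∀ x y z : A, imp (imp (imp x y) z) (imp (imp (imp z x) z) z) = 1
  m1 : ∀ x : A, imp (box x) x = 1
  m2 : ∀ x y : A, imp (imp (imp y (box y)) (imp x (box (box x)))) (box (imp x y)) = imp (box x) (box (box y))
  m3 : ∀ x y : A, imp (imp (box x) (box y)) (box x) = box x
  sup_assoc : ∀ x y z : A, sup x (sup y z) = sup (sup x y) z
  sup_comm : ∀ x y : A, sup x y = sup y x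
  sup_idem : ∀ x : A, sup x x = x
  sup_one : ∀ x : A, sup x 1 = 1
  sup_ax1 : ∀ x y : A, imp x (sup x y) = 1
  sup_ax2 : ∀ x y : A, imp (imp x y) (imp (sup x y) y) = 1
  box_inf : ∀ x y m : A,
    (imp m x = 1 ∧ imp m y = 1 ∧ ∀ z : A, imp z x = 1 → imp z y = 1 → imp z m = 1) →
    (imp (box m) (box x) = 1 ∧ imp (box m) (box y) = 1 ∧
      ∀ z : A, imp z (box x) = 1 → imp z (box y) = 1 → imp z (box m) = 1)

inductive C3 : Type
  | zero
  | half
  | one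
  deriving DecidableEq

namespace C3

def imp : C3 → C3 → C3
  | zero, _ => one
  | half, zero => zero
  | half, _ => one
  | one, y => y

def inf : C3 → C3 → C3
  | zero, _ => zero
  | half, zero => zero
  | half, _ => half
  | one, y => y

def sup : C3 → C3 → C3
  | zero, y => y
  | half, one => one
  | half, _ => half
  | one, _ => one

def box : C3 → C3
  | one => one
  | _ => zero

end C3

/-- The possibility operator `∇x := (x→△x)→△x`. -/
def nabla {A : Type*} [H3vD A] (x : A) : A :=
  H3vD.imp (H3vD.imp x (H3vD.box x)) (H3vD.box x)

/-- A modal deductive system. -/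
def isMDS {A : Type*} [H3vD A] (D : Set A) : Prop :=
  (1 : A) ∈ D ∧ (∀ x y : A, x ∈ D → H3vD.imp x y ∈ D → y ∈ D) ∧
    (∀ x : A, x ∈ D → H3vD.box x ∈ D)

/-- A (non-trivial) maximal modal deductive system. -/
def isMaxMDS {A : Type*} [H3vD A] (M : Set A) : Prop :=
  isMDS M ∧ M ≠ Set.univ ∧
    ∀ D : Set A, isMDS D → M ⊆ D → D = M ∨ D = Set.univ

open Classical in
/-- The map `h : A → C₃^{→,∨}` with `h(x)=0` on `M₀ = {x : ∇x ∉ M}`,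
`h(x)=1/2` on `M_{1/2} = {x : x ∉ M, ∇x ∈ M}` and `h(x)=1` on `M`. -/
noncomputable def hmap {A : Type*} [H3vD A] (M : Set A) (x : A) : C3 :=
  if nabla x ∉ M then C3.zero else if x ∉ M then C3.half else C3.one


section Stmt13Aux

variable {A : Type*} [H3vD A]

local infixr:60 " ⇝ " => H3vD.imp
local notation:max "□" x:max => H3vD.box x
local infixl:65 " ⊻ " => H3vD.sup

lemma hrefl (x : A) : x ⇝ x = 1 := by
  have h := H3vD.sup_ax1 x x
  rwa [H3vD.sup_idem] at h

lemma himp_one (x : A) : x ⇝ (1 : A) = 1 := by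
  have h := H3vD.sup_ax1 x (1 : A)
  rwa [H3vD.sup_one] at h

lemma hmp {a b : A} (hab : a ⇝ b = 1) (ha : a = 1) : b = 1 :=
  H3vD.h3 b 1 (himp_one b) (ha ▸ hab)

lemma hone_imp (x : A) : (1 : A) ⇝ x = x := by
  apply H3vD.h3
  · have t := H3vD.h2 ((1:A) ⇝ x) 1 x
    have t1 := hmp t (hrefl ((1:A) ⇝ x))
    exact hmp t1 (himp_one ((1:A) ⇝ x))
  · exact H3vD.h1 x 1

lemma htrans {a b c : A} (hab : a ⇝ b = 1) (hbc : b ⇝ c = 1) : a ⇝ c = 1 := by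
  have h0 : a ⇝ (b ⇝ c) = 1 := by rw [hbc]; exact himp_one a
  have h' : (a ⇝ b) ⇝ (a ⇝ c) = 1 := hmp (H3vD.h2 a b c) h0
  exact hmp h' hab

lemma hB8 (a b c : A) : (b ⇝ c) ⇝ ((a ⇝ b) ⇝ (a ⇝ c)) = 1 :=
  htrans (H3vD.h1 (b ⇝ c) a) (H3vD.h2 a b c)

lemma hexch_of {a b c : A} (h : a ⇝ (b ⇝ c) = 1) : b ⇝ (a ⇝ c) = 1 :=
  htrans (H3vD.h1 b a) (hmp (H3vD.h2 a b c) h)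

lemma hchainB9 (a b c : A) : (a ⇝ b) ⇝ ((b ⇝ c) ⇝ (a ⇝ c)) = 1 :=
  hexch_of (hB8 a b c)

lemma hB10 (a b : A) : a ⇝ ((a ⇝ b) ⇝ b) = 1 :=
  hexch_of (hrefl (a ⇝ b))

lemma hanti {a b : A} (h : a ⇝ b = 1) (c : A) : (b ⇝ c) ⇝ (a ⇝ c) = 1 :=
  hmp (hchainB9 a b c) h

lemma hmono {b c : A} (h : b ⇝ c = 1) (a : A) : (a ⇝ b) ⇝ (a ⇝ c) = 1 :=
  hmp (hB8 a b c) h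

lemma hcontr (a b : A) : a ⇝ (a ⇝ b) = a ⇝ b := by
  apply H3vD.h3
  · have t := H3vD.h2 a a b
    rw [hrefl a, hone_imp (a ⇝ b)] at t
    exact t
  · exact H3vD.h1 (a ⇝ b) a

lemma hexch_eq (a b c : A) : a ⇝ (b ⇝ c) = b ⇝ (a ⇝ c) := by
  apply H3vD.h3
  · exact htrans (H3vD.h2 a b c) (hanti (H3vD.h1 b a) (a ⇝ c))
  · exact htrans (H3vD.h2 b a c) (hanti (H3vD.h1 a b) (b ⇝ c))

lemma hB11 (a b : A) : ((a ⇝ b) ⇝ b) ⇝ b = a ⇝ b := by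
  apply H3vD.h3
  · exact hanti (hB10 a b) b
  · exact hB10 (a ⇝ b) b

lemma hm2' (x y : A) : □(x ⇝ y) ⇝ (□x ⇝ □□y) = 1 := by
  have e := H3vD.m2 x y
  have t := H3vD.h1 (□(x ⇝ y)) ((y ⇝ □y) ⇝ (x ⇝ □□x))
  rwa [e] at t

lemma box_one' : □(1 : A) = 1 := by
  have ha1 : (1:A) ⇝ □(1:A) = □(1:A) := hone_imp _
  have ha2 : (1:A) ⇝ □□(1:A) = □□(1:A) := hone_imp _
  have h11 : (1:A) ⇝ (1:A) = 1 := hone_imp 1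
  have e1 := H3vD.m2 (1:A) (1:A)
  rw [ha1, ha2, h11] at e1
  have e2 := H3vD.m3 (1:A) (□(1:A))
  have e3 : □(1:A) ⇝ □□(1:A) = □(1:A) := e1.symm.trans e2
  -- e5 : □1 = □1 ⇝ □³1
  have e4 := H3vD.m2 (1:A) (□(1:A))
  rw [ha2, ha1] at e4
  rw [e3] at e4
  rw [e3] at e4
  rw [e3] at e4
  -- e4 : □1 = □1 ⇝ □□□1
  have e6 := H3vD.m2 (1:A) (□□(1:A))
  rw [ha2] at e6
  have e7 := H3vD.m3 (□(1:A)) (□□(1:A))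
  rw [e7] at e6
  -- e6 : □□1 ⇝ □□□1 = □1 ⇝ □□□□1
  have e8 := H3vD.m2 (□(1:A)) (□□(1:A))
  rw [e3] at e8
  rw [← e4] at e8
  rw [e6] at e8
  have e9 := H3vD.m3 (1:A) (□□□(1:A))
  rw [e9] at e8
  rw [e3] at e8
  -- e8 : □1 = □□1 ⇝ □□□□1
  have e10 := hcontr (□□(1:A)) (□□□□(1:A))
  rw [← e8] at e10
  have e11 : □□(1:A) ⇝ □(1:A) = 1 := H3vD.m1 (□(1:A))
  rw [e11] at e10
  exact e10.symm

lemma box_box' (x : A) : □□x = □x := by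
  apply H3vD.h3
  · exact H3vD.m1 (□x)
  · have t := hm2' x x
    rwa [hrefl, box_one', hone_imp] at t

lemma box_mono_le (x y : A) : □(x ⇝ y) ⇝ (□x ⇝ □y) = 1 := by
  have t := hm2' x y
  rwa [box_box' y] at t

lemma box_fix (x : A) : □(x ⇝ □x) = x ⇝ □x := by
  have e := H3vD.m2 x (□x)
  simp only [box_box'] at e
  rw [hrefl, hone_imp] at e
  exact H3vD.h3 _ _ (H3vD.m1 _) e

lemma box_imp_box (x y : A) : □(□x ⇝ □y) = □x ⇝ □y := by
  have e := H3vD.m2 (□x) (□y)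
  simp only [box_box', hrefl, hone_imp] at e
  exact e

lemma le_nabla (x : A) : x ⇝ nabla x = 1 := by
  unfold nabla; exact hB10 x (□x)

lemma box_le_nabla (x : A) : □x ⇝ nabla x = 1 := by
  unfold nabla; exact H3vD.h1 (□x) (x ⇝ □x)

lemma nabla_fix (x : A) : □(nabla x) = nabla x := by
  have key : nabla x = □(x ⇝ □x) ⇝ □x := by unfold nabla; rw [box_fix]
  rw [key, box_imp_box]

lemma nabla_box_eq (x : A) : nabla (□x) = □x := by
  unfold nabla
  rw [box_box', hrefl, hone_imp]

lemma sup_le2' (x y : A) : y ⇝ (x ⊻ y) = 1 := by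
  have t := H3vD.sup_ax1 y x
  rwa [H3vD.sup_comm] at t

lemma sup_eq_of_le {a w : A} (h : a ⇝ w = 1) : a ⊻ w = w :=
  H3vD.h3 _ _ (hmp (H3vD.sup_ax2 a w) h) (sup_le2' a w)

lemma sup_lub {a b w : A} (ha : a ⇝ w = 1) (hb : b ⇝ w = 1) : (a ⊻ b) ⇝ w = 1 := by
  have t : (a ⊻ b) ⇝ ((a ⊻ b) ⊻ w) = 1 := H3vD.sup_ax1 _ _
  have e : (a ⊻ b) ⊻ w = w := by
    rw [← H3vD.sup_assoc, sup_eq_of_le hb, sup_eq_of_le ha]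
  rwa [e] at t

lemma sup_mono_r {b c : A} (h : b ⇝ c = 1) (a : A) : (a ⊻ b) ⇝ (a ⊻ c) = 1 :=
  sup_lub (H3vD.sup_ax1 a c) (htrans h (sup_le2' a c))

section MSec

variable (M : Set A) (hM : isMaxMDS M)
include hM

lemma mem_mp {a b : A} (ha : a ∈ M) (hab : a ⇝ b ∈ M) : b ∈ M :=
  hM.1.2.1 a b ha hab

lemma mem_up {a b : A} (ha : a ∈ M) (h : a ⇝ b = 1) : b ∈ M :=
  mem_mp M hM ha (by rw [h]; exact hM.1.1)

lemma mem_box {a : A} (ha : a ∈ M) : □a ∈ M := hM.1.2.2 a ha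

lemma F0 {x : A} (hx : x ∈ M) : nabla x ∈ M :=
  mem_up M hM (mem_box M hM hx) (box_le_nabla x)

lemma tool1 {x : A} (hx : x ∉ M) : ∀ z, □x ⇝ z ∈ M := by
  set D : Set A := {z | □x ⇝ z ∈ M} with hD_def
  have hD : isMDS D := by
    refine ⟨?_, ?_, ?_⟩
    · show □x ⇝ (1:A) ∈ M
      rw [himp_one]; exact hM.1.1
    · intro a b ha hab
      have t1 : (□x ⇝ a) ⇝ (□x ⇝ b) ∈ M := mem_up M hM hab (H3vD.h2 (□x) a b)
      exact mem_mp M hM ha t1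
    · intro a ha
      have t1 : □(□x ⇝ a) ∈ M := mem_box M hM ha
      have t2 : □□x ⇝ □a ∈ M := mem_up M hM t1 (box_mono_le (□x) a)
      show □x ⇝ □a ∈ M
      rwa [box_box'] at t2
  have hsub : M ⊆ D := fun z hz => mem_up M hM hz (H3vD.h1 z (□x))
  have hxD : x ∈ D := by show □x ⇝ x ∈ M; rw [H3vD.m1]; exact hM.1.1
  rcases hM.2.2 D hD hsub with h | h
  · exact absurd (h ▸ hxD) hx
  · intro z
    have hz : z ∈ D := by rw [h]; exact Set.mem_univ z
    exact hz

lemma LB {x : A} (hx : nabla x ∉ M) : ∀ y, x ⇝ y ∈ M := by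
  have hxM : x ∉ M := fun h => hx (mem_up M hM h (le_nabla x))
  have hnall : ∀ z, nabla x ⇝ z ∈ M := by
    intro z
    have t := tool1 M hM hx z
    rwa [nabla_fix] at t
  have hxbx : x ⇝ □x ∈ M := by
    have h := hnall (□x)
    unfold nabla at h
    rwa [hB11 x (□x)] at h
  intro y
  exact mem_mp M hM hxbx (mem_up M hM (tool1 M hM hxM y) (hB8 x (□x) y))

lemma notZ {w : A} (hall : ∀ z, w ⇝ z ∈ M) (hnw : nabla w ∈ M) : False := by
  have hnw' : (w ⇝ □w) ⇝ □w ∈ M := hnw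
  have hbw : □w ∈ M := mem_mp M hM (hall (□w)) hnw'
  have hw : w ∈ M := mem_up M hM hbw (H3vD.m1 w)
  exact hM.2.1 (Set.eq_univ_of_forall fun z => mem_mp M hM hw (hall z))

lemma case_T_Z {x y : A} (hx : x ∈ M) (hny : nabla y ∉ M) :
    ∀ z, (x ⇝ y) ⇝ z ∈ M := by
  intro z
  have hp : (x ⇝ y) ⇝ y ∈ M := mem_up M hM hx (hB10 x y)
  exact mem_mp M hM hp (mem_up M hM (LB M hM hny z) (hB8 (x ⇝ y) y z))

lemma case_H_Z {x y : A} (hx : x ∉ M) (hnx : nabla x ∈ M) (hny : nabla y ∉ M) :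
    ∀ z, (x ⇝ y) ⇝ z ∈ M := by
  have h2'' : (x ⇝ y) ⇝ (x ⇝ □x) ∈ M :=
    mem_up M hM (LB M hM hny (□x)) (hB8 x y (□x))
  have h4 : (x ⇝ y) ⇝ (nabla x ⇝ □x) ∈ M := by
    have e : (x ⇝ □x) ⇝ (nabla x ⇝ □x) = 1 := by
      unfold nabla; exact hB10 (x ⇝ □x) (□x)
    exact mem_up M hM h2'' (hmono e (x ⇝ y))
  have h5 : nabla x ⇝ ((x ⇝ y) ⇝ □x) ∈ M := by
    rw [hexch_eq (x ⇝ y) (nabla x) (□x)] at h4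
    exact h4
  have h6 : (x ⇝ y) ⇝ □x ∈ M := mem_mp M hM hnx h5
  intro z
  exact mem_mp M hM h6 (mem_up M hM (tool1 M hM hx z) (hB8 (x ⇝ y) (□x) z))

lemma case_H_H {x y : A} (hx : x ∉ M) (hy : y ∉ M) (hny : nabla y ∈ M) :
    x ⇝ y ∈ M := by
  have hny' : (y ⇝ □y) ⇝ □y ∈ M := hny
  have hu : y ⇝ □y ∉ M := fun h =>
    hy (mem_up M hM (mem_mp M hM h hny') (H3vD.m1 y))
  have hnu : nabla (y ⇝ □y) ∉ M := by
    have e : nabla (y ⇝ □y) = y ⇝ □y := by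
      unfold nabla
      rw [box_fix y, hrefl, hone_imp]
    rw [e]; exact hu
  have hK : (y ⇝ □y) ⇝ (x ⇝ □□x) ∈ M := LB M hM hnu _
  have hR : □x ⇝ □□y ∈ M := tool1 M hM hx _
  rw [← H3vD.m2 x y] at hR
  exact mem_up M hM (mem_mp M hM hK hR) (H3vD.m1 (x ⇝ y))

lemma lub_mem {x y z : A} (hxz : x ⇝ z ∈ M) (hyz : y ⇝ z ∈ M) :
    (x ⊻ y) ⇝ z ∈ M := by
  have t1 : x ⇝ (y ⊻ z) ∈ M := mem_up M hM hxz (hmono (sup_le2' y z) x)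
  have t2 : (x ⊻ (y ⊻ z)) ⇝ (y ⊻ z) ∈ M := mem_up M hM t1 (H3vD.sup_ax2 x (y ⊻ z))
  have step3 : (x ⊻ y) ⇝ (x ⊻ (y ⊻ z)) = 1 := sup_mono_r (H3vD.sup_ax1 y z) x
  have t3 : (x ⊻ y) ⇝ (y ⊻ z) ∈ M := mem_up M hM t2 (hanti step3 (y ⊻ z))
  have t4 : (y ⊻ z) ⇝ z ∈ M := mem_up M hM hyz (H3vD.sup_ax2 y z)
  exact mem_mp M hM t3 (mem_up M hM t4 (hB8 (x ⊻ y) (y ⊻ z) z))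

lemma hmap_zero {x : A} (h : nabla x ∉ M) : hmap M x = C3.zero := by
  unfold hmap; rw [if_pos h]

lemma hmap_half {x : A} (h1 : nabla x ∈ M) (h2 : x ∉ M) : hmap M x = C3.half := by
  unfold hmap; rw [if_neg (not_not_intro h1), if_pos h2]

lemma hmap_one' {x : A} (h : x ∈ M) : hmap M x = C3.one := by
  unfold hmap
  rw [if_neg (not_not_intro (F0 M hM h)), if_neg (not_not_intro h)]

end MSec

lemma c3_imp_one (c : C3) : C3.imp c C3.one = C3.one := by cases c <;> rfl
lemma c3_zero_imp (c : C3) : C3.imp C3.zero c = C3.one := by cases c <;> rfl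
lemma c3_sup_one (c : C3) : C3.sup c C3.one = C3.one := by cases c <;> rfl
lemma c3_one_sup (c : C3) : C3.sup C3.one c = C3.one := by cases c <;> rfl

end Stmt13Aux

/-- For a non-trivial maximal modal deductive system `M` of an H₃∨△-algebra,
`hmap M` is a homomorphism onto `C₃^{→,∨}` with `h⁻¹({1}) = M`. -/
theorem stmt13 {A : Type*} [H3vD A] (M : Set A) (hM : isMaxMDS M) :
    (∀ x y : A, hmap M (H3vD.imp x y) = C3.imp (hmap M x) (hmap M y)) ∧
    (∀ x y : A, hmap M (H3vD.sup x y) = C3.sup (hmap M x) (hmap M y)) ∧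
    (∀ x : A, hmap M (H3vD.box x) = C3.box (hmap M x)) ∧
    hmap M (1 : A) = C3.one ∧
    hmap M ⁻¹' {C3.one} = M := by
  refine ⟨?_, ?_, ?_, ?_, ?_⟩
  · -- imp
    intro x y
    by_cases hy : y ∈ M
    · have hxy : H3vD.imp x y ∈ M := mem_up M hM hy (H3vD.h1 y x)
      rw [hmap_one' M hM hxy, hmap_one' M hM hy, c3_imp_one]
    · by_cases hnx : nabla x ∈ M
      · by_cases hx : x ∈ M
        · by_cases hny : nabla y ∈ M
          · -- T, H : half
            have n2 : H3vD.imp x y ∉ M := fun h => hy (mem_mp M hM hx h)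
            have n1 : nabla (H3vD.imp x y) ∈ M := by
              by_contra hcon
              exact notZ M hM
                (fun z => mem_up M hM (LB M hM hcon z) (hanti (H3vD.h1 y x) z)) hny
            rw [hmap_half M hM n1 n2, hmap_one' M hM hx, hmap_half M hM hny hy]
            rfl
          · -- T, Z : zero
            have hz := case_T_Z M hM hx hny
            rw [hmap_zero M hM (fun h => notZ M hM hz h), hmap_one' M hM hx,
              hmap_zero M hM hny]
            rfl
        · by_cases hny : nabla y ∈ M
          · -- H, H : one
            have hxy := case_H_H M hM hx hy hny
            rw [hmap_one' M hM hxy, hmap_half M hM hnx hx, hmap_half M hM hny hy]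
            rfl
          · -- H, Z : zero
            have hz := case_H_Z M hM hx hnx hny
            rw [hmap_zero M hM (fun h => notZ M hM hz h), hmap_half M hM hnx hx,
              hmap_zero M hM hny]
            rfl
      · -- Z x : one
        have hxy : H3vD.imp x y ∈ M := LB M hM hnx y
        rw [hmap_one' M hM hxy, hmap_zero M hM hnx, c3_zero_imp]
  · -- sup
    intro x y
    by_cases hx : x ∈ M
    · have hs : H3vD.sup x y ∈ M := mem_up M hM hx (H3vD.sup_ax1 x y)
      rw [hmap_one' M hM hs, hmap_one' M hM hx, c3_one_sup]
    · by_cases hy : y ∈ M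
      · have hs : H3vD.sup x y ∈ M := mem_up M hM hy (sup_le2' x y)
        rw [hmap_one' M hM hs, hmap_one' M hM hy, c3_sup_one]
      · by_cases hnx : nabla x ∈ M
        · -- x H
          have hns : nabla (H3vD.sup x y) ∈ M := by
            by_contra hcon
            exact notZ M hM
              (fun z => mem_up M hM (LB M hM hcon z) (hanti (H3vD.sup_ax1 x y) z)) hnx
          have hsM : H3vD.sup x y ∉ M := by
            intro hmem
            by_cases hny : nabla y ∈ M
            · have hxy := case_H_H M hM hx hy hny
              exact hy (mem_mp M hM hmem (mem_up M hM hxy (H3vD.sup_ax2 x y)))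
            · have t1 : H3vD.imp (H3vD.sup y x) x ∈ M :=
                mem_up M hM (LB M hM hny x) (H3vD.sup_ax2 y x)
              rw [H3vD.sup_comm] at t1
              exact hx (mem_mp M hM hmem t1)
          rw [hmap_half M hM hns hsM, hmap_half M hM hnx hx]
          by_cases hny : nabla y ∈ M
          · rw [hmap_half M hM hny hy]
            rfl
          · rw [hmap_zero M hM hny]
            rfl
        · by_cases hny : nabla y ∈ M
          · -- x Z, y H
            have hns : nabla (H3vD.sup x y) ∈ M := by
              by_contra hcon
              exact notZ M hM
                (fun z => mem_up M hM (LB M hM hcon z) (hanti (sup_le2' x y) z)) hny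
            have hsM : H3vD.sup x y ∉ M := fun hmem =>
              hy (mem_mp M hM hmem (mem_up M hM (LB M hM hnx y) (H3vD.sup_ax2 x y)))
            rw [hmap_half M hM hns hsM, hmap_zero M hM hnx, hmap_half M hM hny hy]
            rfl
          · -- x Z, y Z
            have hns : nabla (H3vD.sup x y) ∉ M := fun h =>
              notZ M hM (fun z => lub_mem M hM (LB M hM hnx z) (LB M hM hny z)) h
            rw [hmap_zero M hM hns, hmap_zero M hM hnx, hmap_zero M hM hny]
            rfl
  · -- box
    intro x
    by_cases hx : x ∈ M
    · rw [hmap_one' M hM (mem_box M hM hx), hmap_one' M hM hx]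
      rfl
    · have hbx : H3vD.box x ∉ M := fun h => hx (mem_up M hM h (H3vD.m1 x))
      have hnbx : nabla (H3vD.box x) ∉ M := by
        rw [nabla_box_eq]; exact hbx
      rw [hmap_zero M hM hnbx]
      by_cases hnx : nabla x ∈ M
      · rw [hmap_half M hM hnx hx]
        rfl
      · rw [hmap_zero M hM hnx]
        rfl
  · exact hmap_one' M hM hM.1.1
  · ext x
    simp only [Set.mem_preimage, Set.mem_singleton_iff]
    constructor
    · intro h
      by_cases hnx : nabla x ∈ M
      · by_cases hx : x ∈ M
        · exact hx
        · rw [hmap_half M hM hnx hx] at h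
          exact absurd h (by decide)
      · rw [hmap_zero M hM hnx] at h
        exact absurd h (by decide)
    · intro h
      exact hmap_one' M hM h
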